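/- For M = k·q with 1 ≤ k ≤ q^{n−1}, the (n,q,k)-OptCeRA code C achieves the maximum possible average Hamming distance: D(C) = n·(1 − 1/q), and consequently D(C) ≥ D(C') for every code C' ⊆ (Fin q)^n with |C'| = M. -/

import Mathlib

/-!
Counting agreements coordinatewise, `∑_{x,y ∈ C} d(x,y) = n·M² − ∑_i ∑_a N_{i,a}²`, where
`N_{i,a}` is the number of codewords with symbol `a` in coordinate `i`. Since `∑_a N_{i,a} = M`,
Cauchy–Schwarz gives `∑_a N_{i,a}² ≥ M²/q`, hence `D(C) ≤ n(1 − 1/q)` for every code, with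
equality as soon as every symbol occurs equally often in every coordinate.

For the OptCeRA code, coordinate `i` of `c(t)` is `(t mod q + s(⌊t/q⌋)) mod q` for some function
`s`, so each of the `k` blocks `{qu, …, qu + q − 1}` contributes every symbol exactly once. The
words are distinct for `t < qⁿ`, because the prefix sums modulo `q` recover the digits one by one.
-/

open Finset

theorem sum_sum_ite_eq_sum_sq_card_filter {γ β : Type*} [Fintype β] [DecidableEq β]
    (s : Finset γ) (g : γ → β) :
    ∑ x ∈ s, ∑ y ∈ s, (if g x = g y then 1 else 0) = ∑ b, #{x ∈ s | g x = b} ^ 2 := by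
  rw [← sum_fiberwise s g]
  refine sum_congr rfl fun b _ => ?_
  rw [sq, ← smul_eq_mul, ← sum_const]
  refine sum_congr rfl fun x hx => ?_
  rw [← card_filter, (mem_filter.mp hx).2]
  simp_rw [eq_comm]

theorem sq_card_div_le_sum_sq_card_filter {γ β : Type*} [Fintype β] [DecidableEq β]
    (s : Finset γ) (g : γ → β) :
    (#s : ℝ) ^ 2 / Fintype.card β ≤ ∑ b, (#{x ∈ s | g x = b} : ℝ) ^ 2 := by
  have hfib : (#s : ℝ) = ∑ b, (#{x ∈ s | g x = b} : ℝ) := by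
    exact_mod_cast card_eq_sum_card_fiberwise fun x _ => mem_univ (g x)
  simpa [hfib] using pow_sum_div_card_le_sum_pow (s := univ) (fun b _ => by positivity) 1

section Hamming

variable {ι α : Type*} [Fintype ι] [Fintype α] [DecidableEq α]

theorem sum_sum_hammingDist_add_sum_sq_card_filter (s : Finset (ι → α)) :
    ∑ x ∈ s, ∑ y ∈ s, hammingDist x y + ∑ i, ∑ a, #{x ∈ s | x i = a} ^ 2
      = Fintype.card ι * #s ^ 2 := by
  have hagree (x y : ι → α) :
      hammingDist x y + ∑ i, (if x i = y i then 1 else 0) = Fintype.card ι := by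
    rw [← card_filter, add_comm, hammingDist, card_filter_add_card_filter_not, card_univ]
  calc ∑ x ∈ s, ∑ y ∈ s, hammingDist x y + ∑ i, ∑ a, #{x ∈ s | x i = a} ^ 2
      = ∑ x ∈ s, ∑ y ∈ s, (hammingDist x y + ∑ i, (if x i = y i then 1 else 0)) := by
        simp_rw [← sum_sum_ite_eq_sum_sq_card_filter s (fun x => x _), sum_add_distrib]
        rw [sum_comm (s := univ), sum_congr rfl fun i _ => sum_comm (s := univ)]
    _ = Fintype.card ι * #s ^ 2 := by simp only [hagree, sum_const, smul_eq_mul]; ring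

theorem sum_sum_hammingDist_eq (s : Finset (ι → α)) :
    ∑ x ∈ s, ∑ y ∈ s, (hammingDist x y : ℝ)
      = Fintype.card ι * #s ^ 2 - ∑ i, ∑ a, (#{x ∈ s | x i = a} : ℝ) ^ 2 := by
  rw [eq_sub_iff_add_eq]
  exact_mod_cast sum_sum_hammingDist_add_sum_sq_card_filter s

noncomputable def avgHammingDist (s : Finset (ι → α)) : ℝ :=
  1 / (#s : ℝ) ^ 2 * ∑ x ∈ s, ∑ y ∈ s, (hammingDist x y : ℝ)

theorem avgHammingDist_le (s : Finset (ι → α)) :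
    avgHammingDist s ≤ Fintype.card ι * (1 - 1 / Fintype.card α) := by
  obtain rfl | hs := s.eq_empty_or_nonempty
  · simp only [avgHammingDist, sum_empty, mul_zero]
    exact mul_nonneg (Nat.cast_nonneg _) (sub_nonneg.2 (by simpa using Nat.cast_inv_le_one _))
  have hcol : (Fintype.card ι : ℝ) * (#s ^ 2 / Fintype.card α)
      ≤ ∑ i, ∑ a, (#{x ∈ s | x i = a} : ℝ) ^ 2 := by
    have := sum_le_sum fun i (_ : i ∈ univ) => sq_card_div_le_sum_sq_card_filter s (· i)
    rwa [sum_const, card_univ, nsmul_eq_mul] at this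
  rw [avgHammingDist, sum_sum_hammingDist_eq, one_div_mul_eq_div, div_le_iff₀ (by positivity)]
  linarith [show (Fintype.card ι : ℝ) * (1 - 1 / Fintype.card α) * #s ^ 2
    = Fintype.card ι * #s ^ 2 - Fintype.card ι * (#s ^ 2 / Fintype.card α) by ring]

theorem avgHammingDist_eq_of_card_filter_eq [Nonempty α] (s : Finset (ι → α)) {k : ℕ}
    (hk : k ≠ 0) (hs : #s = k * Fintype.card α) (hcol : ∀ i a, #{x ∈ s | x i = a} = k) :
    avgHammingDist s = Fintype.card ι * (1 - 1 / Fintype.card α) := by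
  have hα : (Fintype.card α : ℝ) ≠ 0 := by positivity
  simp only [avgHammingDist, sum_sum_hammingDist_eq, hcol, hs, sum_const, card_univ]
  push_cast
  field_simp
  ring

end Hamming

def digitPrefixSum (q t i : ℕ) : ℕ := ∑ l ∈ range i, t / q ^ l % q

theorem digitPrefixSum_zero (q t : ℕ) : digitPrefixSum q t 0 = 0 := rfl

theorem digitPrefixSum_succ (q t i : ℕ) :
    digitPrefixSum q t (i + 1) = t % q + digitPrefixSum q (t / q) i := by
  simp only [digitPrefixSum, sum_range_succ', pow_zero, Nat.div_one, pow_succ',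
    Nat.div_div_eq_div_mul, add_comm]

theorem eq_of_digitPrefixSum_mod_eq {q n t t' : ℕ} (ht : t < q ^ n) (ht' : t' < q ^ n)
    (h : ∀ i < n, digitPrefixSum q t (i + 1) % q = digitPrefixSum q t' (i + 1) % q) :
    t = t' := by
  induction n generalizing t t' with
  | zero => simp_all
  | succ n ih =>
    have hmod : t % q = t' % q := by
      simpa [digitPrefixSum_succ, digitPrefixSum_zero] using h 0 n.succ_pos
    have hdiv : t / q = t' / q := by
      refine ih (Nat.div_lt_of_lt_mul (pow_succ' q n ▸ ht))
        (Nat.div_lt_of_lt_mul (pow_succ' q n ▸ ht')) fun i hi => ?_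
      have := h (i + 1) (by omega)
      rw [digitPrefixSum_succ q t, digitPrefixSum_succ q t', hmod] at this
      exact Nat.ModEq.add_left_cancel' _ this
    rw [← Nat.div_add_mod t q, ← Nat.div_add_mod t' q, hdiv, hmod]

section OptCeRA

variable {q : ℕ} [NeZero q]

theorem add_mod_eq_iff_eq_sub (r a : Fin q) (m : ℕ) :
    ((r : ℕ) + m) % q = a ↔ r = a - Fin.ofNat q m := by
  rw [eq_sub_iff_add_eq, Fin.ext_iff, Fin.val_add, Fin.val_ofNat, Nat.add_mod_mod]

theorem card_filter_mod_add_div_eq (g : ℕ → ℕ) (k : ℕ) (a : Fin q) :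
    #{t ∈ range (k * q) | (t % q + g (t / q)) % q = a} = k := by
  have hq := NeZero.pos q
  -- `t ↦ t / q` is a bijection onto `range k`: the condition forces `t % q = r (t / q)`.
  let r (u : ℕ) : Fin q := a - Fin.ofNat q (g u)
  have hr (u : ℕ) : (r u : ℕ) < q := (r u).is_lt
  have hdiv (u : ℕ) : (q * u + r u) / q = u := by
    rw [Nat.mul_add_div hq, Nat.div_eq_of_lt (hr u), add_zero]
  have hmod (u : ℕ) : (q * u + r u) % q = r u := by
    rw [Nat.mul_add_mod, Nat.mod_eq_of_lt (hr u)]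
  refine (card_nbij' (· / q) (fun u => q * u + r u) ?_ ?_ ?_ ?_).trans (card_range k)
  · intro t ht
    simp only [coe_filter, mem_range, Set.mem_ofPred_eq, coe_range, Set.mem_Iio] at ht ⊢
    exact Nat.div_lt_of_lt_mul (by linarith [ht.1])
  · intro u hu
    simp only [coe_filter, mem_range, Set.mem_ofPred_eq, coe_range, Set.mem_Iio] at hu ⊢
    refine ⟨by nlinarith [hr u], ?_⟩
    rw [hmod, hdiv, add_mod_eq_iff_eq_sub]
  · intro t ht
    simp only [coe_filter, mem_range, Set.mem_ofPred_eq] at ht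
    have hrt : (r (t / q) : ℕ) = t % q := by
      simp only [r, ← (add_mod_eq_iff_eq_sub ⟨t % q, Nat.mod_lt t hq⟩ a _).mp ht.2]
    simp only [hrt, Nat.div_add_mod]
  · intro u _
    exact hdiv u

def optCeRAWord (q n : ℕ) [NeZero q] (t : ℕ) : Fin n → Fin q :=
  fun i => ⟨digitPrefixSum q t (i + 1) % q, Nat.mod_lt _ (NeZero.pos q)⟩

def optCeRA (q n k : ℕ) [NeZero q] : Finset (Fin n → Fin q) :=
  (range (k * q)).image (optCeRAWord q n)

variable {n k : ℕ}

theorem injOn_optCeRAWord : Set.InjOn (optCeRAWord q n) (Set.Iio (q ^ n)) :=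
  fun _ ht _ ht' h => eq_of_digitPrefixSum_mod_eq ht ht' fun i hi =>
    congrArg Fin.val (congrFun h ⟨i, hi⟩)

theorem injOn_optCeRAWord_range (h : k * q ≤ q ^ n) :
    Set.InjOn (optCeRAWord q n) (range (k * q)) :=
  injOn_optCeRAWord.mono (by simpa using h)

theorem card_optCeRA (h : k * q ≤ q ^ n) : #(optCeRA q n k) = k * q := by
  rw [optCeRA, card_image_of_injOn (injOn_optCeRAWord_range h), card_range]

theorem card_filter_optCeRA (h : k * q ≤ q ^ n) (i : Fin n) (a : Fin q) :
    #{x ∈ optCeRA q n k | x i = a} = k := by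
  rw [optCeRA, filter_image,
    card_image_of_injOn ((injOn_optCeRAWord_range h).mono (filter_subset _ _))]
  convert card_filter_mod_add_div_eq (fun u => digitPrefixSum q u i) k a using 3
  simp only [Fin.ext_iff, optCeRAWord, digitPrefixSum_succ]

end OptCeRA

/-- For `M = k·q` with `1 ≤ k ≤ q^(n-1)`, the `(n,q,k)`-OptCeRA code
`C` (consisting of the words `c(t)`, `0 ≤ t < M`, where `c(t)_i = (a_1 + ⋯ + a_i) mod q`
and `(a_n,…,a_1)` are the base-`q` digits of `t`) achieves the maximum possible average
Hamming distance: `D(C) = n·(1 - 1/q)`, and consequently `D(C) ≥ D(C')` for every code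
`C' ⊆ (Fin q)ⁿ` with `|C'| = M`. -/
theorem optcera_code_is_mad (q n k : ℕ) (hq : 2 ≤ q) (hn : 1 ≤ n)
    (hk : 1 ≤ k) (hkq : k ≤ q ^ (n - 1)) :
    letI M : ℕ := k * q
    letI c : ℕ → Fin n → Fin q := fun t i =>
      ⟨(∑ l ∈ Finset.range (i.1 + 1), (t / q ^ l % q)) % q, Nat.mod_lt _ (by omega)⟩
    letI C : Finset (Fin n → Fin q) := (Finset.range M).image c
    letI D : Finset (Fin n → Fin q) → ℝ := fun C' =>
      (1 / (C'.card : ℝ) ^ 2) * ∑ x ∈ C', ∑ y ∈ C', (hammingDist x y : ℝ)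
    D C = (n : ℝ) * (1 - 1 / (q : ℝ)) ∧
      ∀ C' : Finset (Fin n → Fin q), C'.card = M → D C' ≤ D C := by
  have : NeZero q := ⟨by omega⟩
  have hlen : k * q ≤ q ^ n :=
    calc k * q ≤ q ^ (n - 1) * q := Nat.mul_le_mul_right q hkq
      _ = q ^ n := by rw [← pow_succ, Nat.sub_add_cancel hn]
  have hC : avgHammingDist (optCeRA q n k) = n * (1 - 1 / q) := by
    simpa using avgHammingDist_eq_of_card_filter_eq (optCeRA q n k) (by omega : k ≠ 0)
      (by simpa using card_optCeRA hlen) (card_filter_optCeRA hlen)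
  show avgHammingDist (optCeRA q n k) = _ ∧
    ∀ C' : Finset (Fin n → Fin q), #C' = k * q →
      avgHammingDist C' ≤ avgHammingDist (optCeRA q n k)
  exact ⟨hC, fun C' _ => hC ▸ by simpa using avgHammingDist_le C'⟩
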